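/- arXiv:1906.07602 — 7 statements merged into one kernel-verified Lean document; each statement's English description precedes it below -/
import Mathlib

section
/- There exists a 2-agent chore allocation instance for which no allocation gives both agents value strictly greater than (4/3)·WMMS_i. Concretely: agents with shares s_1 = 3/4, s_2 = 1/4, two chores with V_1 = (-3/4, -1/4) and V_2 = (-1/2, -1/2), satisfy WMMS_1 = -3/4, WMMS_2 = -1/3, and every allocation of the two chores gives some agent i value at most (4/3)·WMMS_i. -/
/-! The maxmin shares are attained by splitting the chores for agent 0 (both weighted bundle
ratios equal `-1`) and by giving both chores to bundle 0 for agent 1 (ratio `-4/3`, while a chore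
in bundle 1 already has ratio `-2`). In an allocation where agent 1 receives a chore, its value is at
most `-1/2 ≤ -4/9 = (4/3)·WMMS_1`; otherwise agent 0 carries both chores, with value
`-1 = (4/3)·WMMS_0`.
-/

open Finset

/-- Total value of bundle `k` in the partition `X` of the chores, under valuation `V`. -/
noncomputable def bundleVal {n m : ℕ} (V : Fin m → ℝ) (X : Fin m → Fin n) (k : Fin n) : ℝ :=
  ∑ j ∈ Finset.univ.filter (fun j => X j = k), V j

/-- The weighted maxmin share of agent `i` with valuation `V` and shares `s`:
`s i` times the maximum over all `n`-partitions of the minimum weighted bundle ratio. -/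
noncomputable def WMMS {n m : ℕ} (hn : 0 < n) (s : Fin n → ℝ) (V : Fin m → ℝ) (i : Fin n) : ℝ :=
  haveI : NeZero n := ⟨hn.ne'⟩
  s i * (Finset.univ : Finset (Fin m → Fin n)).sup' Finset.univ_nonempty
    (fun X => (Finset.univ : Finset (Fin n)).inf' Finset.univ_nonempty
      (fun k => bundleVal V X k / s k))

theorem bundleVal_fin_two {n : ℕ} (V : Fin 2 → ℝ) (X : Fin 2 → Fin n) (k : Fin n) :
    bundleVal V X k = (if X 0 = k then V 0 else 0) + (if X 1 = k then V 1 else 0) := by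
  simp [bundleVal, Finset.sum_filter, Fin.sum_univ_two]

theorem WMMS_eq_of_forall_exists_le {n m : ℕ} (hn : 0 < n) (s : Fin n → ℝ) (V : Fin m → ℝ)
    (i : Fin n) {c : ℝ} (X₀ : Fin m → Fin n) (hX₀ : ∀ k, c ≤ bundleVal V X₀ k / s k)
    (hc : ∀ X, ∃ k, bundleVal V X k / s k ≤ c) : WMMS hn s V i = s i * c := by
  have : NeZero n := ⟨hn.ne'⟩
  rw [WMMS]
  congr 1
  refine le_antisymm (Finset.sup'_le _ _ fun X _ => ?_) ?_
  · obtain ⟨k, hk⟩ := hc X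
    exact (Finset.inf'_le _ (Finset.mem_univ k)).trans hk
  · exact Finset.le_sup'_of_le _ (Finset.mem_univ X₀) (Finset.le_inf' _ _ fun k _ => hX₀ k)

theorem WMMS_agent_zero_eq :
    WMMS (n := 2) (by norm_num) ![3/4, 1/4] ![-3/4, -1/4] 0 = -3/4 := by
  rw [WMMS_eq_of_forall_exists_le _ _ _ _ (c := -1) ![0, 1]]
  · norm_num
  · simp only [Fin.forall_fin_two, bundleVal_fin_two]
    norm_num
  · simp only [Fin.forall_fin_succ_pi, Fin.forall_fin_zero_pi, Fin.forall_fin_two,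
      Fin.exists_fin_two, bundleVal_fin_two]
    norm_num [Fin.cons_zero, Fin.cons_one]

theorem WMMS_agent_one_eq :
    WMMS (n := 2) (by norm_num) ![3/4, 1/4] ![-1/2, -1/2] 1 = -1/3 := by
  rw [WMMS_eq_of_forall_exists_le _ _ _ _ (c := -4/3) ![0, 0]]
  · norm_num
  · simp only [Fin.forall_fin_two, bundleVal_fin_two]
    norm_num
  · simp only [Fin.forall_fin_succ_pi, Fin.forall_fin_zero_pi, Fin.forall_fin_two,
      Fin.exists_fin_two, bundleVal_fin_two]
    norm_num [Fin.cons_zero, Fin.cons_one]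

/-- Lower bound instance: no allocation of the two chores gives both agents value strictly
greater than `(4/3)·WMMS_i`. -/
theorem stmt_3 :
    let s : Fin 2 → ℝ := ![3/4, 1/4]
    let V : Fin 2 → Fin 2 → ℝ := ![![-3/4, -1/4], ![-1/2, -1/2]]
    WMMS (by norm_num) s (V 0) 0 = -3/4 ∧
    WMMS (by norm_num) s (V 1) 1 = -1/3 ∧
    ∀ X : Fin 2 → Fin 2, ∃ i : Fin 2,
      bundleVal (V i) X i ≤ (4/3) * WMMS (by norm_num) s (V i) i := by
  intro s V
  have hW₀ : WMMS (by norm_num) s (V 0) 0 = -3/4 := WMMS_agent_zero_eq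
  have hW₁ : WMMS (by norm_num) s (V 1) 1 = -1/3 := WMMS_agent_one_eq
  refine ⟨hW₀, hW₁, fun X => ?_⟩
  by_cases h : X 0 = 1 ∨ X 1 = 1
  · refine ⟨1, ?_⟩
    rw [hW₁, bundleVal_fin_two]
    rcases h with h | h <;> split_ifs <;> norm_num [V]
  · refine ⟨0, ?_⟩
    obtain ⟨h₀, h₁⟩ : X 0 = 0 ∧ X 1 = 0 := by omega
    rw [hW₀, bundleVal_fin_two, if_pos h₀, if_pos h₁]
    norm_num [V]
end

section
/- Rounding lemma: Given agents N, chores M, valuations V_{ij} ≤ 0, thresholds t_i ≤ 0 and targets w_i ≤ 0, define M_i = {j : V_{ij} ≥ t_i}. If the fractional polytope {x ≥ 0 : Σ_{j∈M_i} V_{ij} x_{ij} ≥ w_i for all i, Σ_{i : j∈M_i} x_{ij} = 1 for all j} is nonempty, then there exists an integral assignment x̄ ∈ {0,1} with each chore assigned to exactly one agent i with j ∈ M_i, satisfying Σ_{j∈M_i} V_{ij} x̄_{ij} ≥ w_i + t_i for every agent i. -/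
/-! Take a feasible fractional solution `x` of minimal support. If a set `S` of chores met more
support edges than `#S` plus the number of agents adjacent to `S`, a dimension count would give a
nonzero direction, supported on those edges, preserving every chore sum and every agent value;
moving along it until a coordinate vanishes would shrink the support. So every set of fractional
chores, each held by at least two agents, has at least as many adjacent agents as chores, and
Hall's theorem matches the fractional chores injectively to agents holding them. Giving every
integral chore to its holder and every fractional chore to its match, agent `i` keeps the chores
with `x i j = 1`, drops only nonpositive fractional value, and receives at most one further
chore, worth at least `t i`. -/

open Finset

section

variable {ι κ : Type*} [Fintype ι] [Fintype κ]

theorem exists_ne_zero_balanced (V : ι → κ → ℝ) {E : Finset (ι × κ)} {A : Finset ι}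
    {B : Finset κ} (hE : E ⊆ A ×ˢ B) (hcard : #A + #B < #E) :
    ∃ d : ι × κ → ℝ, d ≠ 0 ∧ (∀ e ∉ E, d e = 0) ∧ (∀ j, ∑ i, d (i, j) = 0) ∧
      ∀ i, ∑ j, V i j * d (i, j) = 0 := by
  let L : (ι × κ → ℝ) →ₗ[ℝ] (A → ℝ) × (B → ℝ) :=
    (LinearMap.pi fun a : A => ∑ j, V a j • LinearMap.proj ((a : ι), j)).prod
      (LinearMap.pi fun b : B => ∑ i, LinearMap.proj (i, (b : κ)))
  let extend := Function.ExtendByZero.linearMap ℝ (Subtype.val : E → ι × κ)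
  have hker : LinearMap.ker (L ∘ₗ extend) ≠ ⊥ :=
    LinearMap.ker_ne_bot_of_finrank_lt (by simpa using hcard)
  obtain ⟨c, hc, hc0⟩ := (Submodule.ne_bot_iff _).mp hker
  set d := extend c
  have hLd : L d = 0 := hc
  have hd : ∀ e ∉ E, d e = 0 := fun e he =>
    Function.extend_apply' _ _ _ fun ⟨e', he'⟩ => he (he' ▸ e'.2)
  have hoff : ∀ i j, (i ∉ A ∨ j ∉ B) → d (i, j) = 0 := fun i j h =>
    hd _ fun he => by have := mem_product.mp (hE he); tauto
  have hd0 : d ≠ 0 := fun h => hc0 <|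
    Function.extend_injective Subtype.val_injective (0 : ι × κ → ℝ) <|
      h.trans (Function.extend_zero _).symm
  refine ⟨d, hd0, hd, fun j => ?_, fun i => ?_⟩
  · by_cases hj : j ∈ B
    · simpa [L] using congrFun (congrArg Prod.snd hLd) ⟨j, hj⟩
    · exact sum_eq_zero fun i _ => hoff i j (Or.inr hj)
  · by_cases hi : i ∈ A
    · simpa [L] using congrFun (congrArg Prod.fst hLd) ⟨i, hi⟩
    · exact sum_eq_zero fun j _ => by rw [hoff i j (Or.inl hi), mul_zero]

theorem exists_add_mul_nonneg_of_neg {α : Type*} [Fintype α] {x d : α → ℝ}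
    (hx : ∀ a, 0 ≤ x a) (hd : ∀ a, d a ≠ 0 → 0 < x a) (hneg : ∃ a, d a < 0) :
    ∃ ε : ℝ, (∀ a, 0 ≤ x a + ε * d a) ∧ ∃ a, 0 < x a ∧ x a + ε * d a = 0 := by
  obtain ⟨a₀, ha₀, hmin⟩ := exists_min_image (univ.filter fun a => d a < 0)
    (fun a => x a / -d a) (by simpa [Finset.Nonempty] using hneg)
  rw [mem_filter] at ha₀
  have hpos : 0 < -d a₀ := neg_pos.mpr ha₀.2
  have hε : x a₀ / -d a₀ * -d a₀ = x a₀ := div_mul_cancel₀ _ hpos.ne'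
  refine ⟨x a₀ / -d a₀, fun a => ?_, a₀, hd a₀ ha₀.2.ne, by linarith⟩
  rcases lt_or_ge (d a) 0 with ha | ha
  · have := (le_div_iff₀ (neg_pos.mpr ha)).mp (hmin a (by simpa using ha))
    linarith
  · exact add_nonneg (hx a) (mul_nonneg (div_nonneg (hx a₀) hpos.le) ha)

theorem exists_add_mul_nonneg {α : Type*} [Fintype α] {x d : α → ℝ}
    (hx : ∀ a, 0 ≤ x a) (hd : ∀ a, d a ≠ 0 → 0 < x a) (hd₀ : d ≠ 0) :
    ∃ ε : ℝ, (∀ a, 0 ≤ x a + ε * d a) ∧ ∃ a, 0 < x a ∧ x a + ε * d a = 0 := by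
  obtain ⟨a, ha⟩ := Function.ne_iff.mp hd₀
  rcases lt_or_gt_of_ne ha with ha | ha
  · exact exists_add_mul_nonneg_of_neg hx hd ⟨a, ha⟩
  · obtain ⟨ε, hε, b, hb⟩ := exists_add_mul_nonneg_of_neg (d := -d) hx
      (fun a h => hd a (by simpa using h)) ⟨a, by simpa using ha⟩
    exact ⟨-ε, fun a => by simpa using hε a, b, by simpa using hb⟩

structure IsFeasibleFraction (V : ι → κ → ℝ) (t w : ι → ℝ) (x : ι → κ → ℝ) : Prop where
  nonneg : ∀ i j, 0 ≤ x i j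
  eq_zero_of_lt : ∀ i j, V i j < t i → x i j = 0
  sum_eq_one : ∀ j, ∑ i, x i j = 1
  le_value : ∀ i, w i ≤ ∑ j, V i j * x i j

noncomputable def posSupport (x : ι → κ → ℝ) : Finset (ι × κ) :=
  univ.filter fun e => 0 < x e.1 e.2

noncomputable def holders (x : ι → κ → ℝ) (j : κ) : Finset ι :=
  univ.filter fun i => 0 < x i j

namespace IsFeasibleFraction

variable {V : ι → κ → ℝ} {t w : ι → ℝ} {x : ι → κ → ℝ}

theorem le_one (hx : IsFeasibleFraction V t w x) (i : ι) (j : κ) : x i j ≤ 1 :=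
  hx.sum_eq_one j ▸ single_le_sum (fun i _ => hx.nonneg i j) (mem_univ i)

theorem exists_posSupport_ssubset (hx : IsFeasibleFraction V t w x) {d : ι × κ → ℝ}
    (hd₀ : d ≠ 0) (hd : ∀ e ∉ posSupport x, d e = 0) (hcol : ∀ j, ∑ i, d (i, j) = 0)
    (hrow : ∀ i, ∑ j, V i j * d (i, j) = 0) :
    ∃ y, IsFeasibleFraction V t w y ∧ posSupport y ⊂ posSupport x := by
  have hdx : ∀ i j, x i j ≤ 0 → d (i, j) = 0 := fun i j h =>
    hd _ (by simpa [posSupport] using h)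
  obtain ⟨ε, hε, ⟨i₀, j₀⟩, hpos, hzero⟩ := exists_add_mul_nonneg (x := Function.uncurry x)
    (fun e => hx.nonneg e.1 e.2) (fun e h => not_le.mp (mt (hdx e.1 e.2) h)) hd₀
  refine ⟨fun i j => x i j + ε * d (i, j), ⟨fun i j => hε (i, j), fun i j h => ?_, fun j => ?_,
    fun i => ?_⟩, ?_⟩
  · rw [hx.eq_zero_of_lt i j h, hdx i j (hx.eq_zero_of_lt i j h).le, mul_zero, add_zero]
  · rw [sum_add_distrib, ← mul_sum, hcol, mul_zero, add_zero, hx.sum_eq_one]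
  · simp_rw [mul_add, sum_add_distrib, mul_left_comm _ ε, ← mul_sum, hrow, mul_zero, add_zero]
    exact hx.le_value i
  · refine ssubset_of_subset_of_ne (fun e he => ?_) fun h => ?_
    · simp only [posSupport, mem_filter, mem_univ, true_and] at he ⊢
      by_contra hxe
      rw [hdx e.1 e.2 (not_lt.mp hxe), mul_zero, add_zero] at he
      exact hxe he
    · have : (i₀, j₀) ∈ posSupport x := by simpa [posSupport] using hpos
      rw [← h] at this
      simp only [posSupport, mem_filter, mem_univ, true_and, Function.uncurry] at this hzero
      linarith

theorem sum_card_holders_le [DecidableEq ι] [DecidableEq κ] (hx : IsFeasibleFraction V t w x)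
    (hmin : ∀ y, IsFeasibleFraction V t w y → ¬ posSupport y ⊂ posSupport x) (S : Finset κ) :
    ∑ j ∈ S, #(holders x j) ≤ #S + #(S.biUnion (holders x)) := by
  set E := (univ ×ˢ S).filter fun e => 0 < x e.1 e.2
  have hE : #E = ∑ j ∈ S, #(holders x j) := by
    simp only [E, holders, card_filter, sum_product_right]
  have hEsub : E ⊆ S.biUnion (holders x) ×ˢ S := fun e he => by
    simp only [E, mem_filter, mem_product, mem_univ, true_and] at he
    simp only [mem_product, mem_biUnion, holders, mem_filter, mem_univ, true_and]
    exact ⟨⟨e.2, he⟩, he.1⟩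
  by_contra! hlt
  obtain ⟨d, hd₀, hd, hcol, hrow⟩ := exists_ne_zero_balanced V hEsub (by omega)
  obtain ⟨y, hy, hss⟩ := hx.exists_posSupport_ssubset hd₀
    (fun e he => hd e fun h => he (by simp_all [E, posSupport])) hcol hrow
  exact hmin y hy hss

theorem two_le_card_holders (hx : IsFeasibleFraction V t w x) {j : κ} (hj : ∀ i, x i j < 1) :
    2 ≤ #(holders x j) := by
  by_contra! hcard
  have hsum : ∑ i ∈ holders x j, x i j = 1 := by
    rw [holders, sum_filter_of_ne fun i _ h => lt_of_le_of_ne (hx.nonneg i j) (Ne.symm h)]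
    exact hx.sum_eq_one j
  obtain ⟨i, hi⟩ := nonempty_of_sum_ne_zero (hsum ▸ one_ne_zero)
  exact (hj i).ne (eq_of_card_le_one_of_sum_eq (by omega) hsum i hi)

theorem exists_assignment [DecidableEq ι] (hx : IsFeasibleFraction V t w x)
    (hsparse : ∀ S : Finset κ, ∑ j ∈ S, #(holders x j) ≤ #S + #(S.biUnion (holders x))) :
    ∃ X : κ → ι, (∀ j, 0 < x (X j) j) ∧ ∀ i, #(univ.filter fun j => X j = i ∧ x i j < 1) ≤ 1 := by
  have hall : ∀ A : Finset {j // ∀ i, x i j < 1},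
      #A ≤ #(A.biUnion fun j => holders x j) := by
    intro A
    have h2 := card_nsmul_le_sum (A.map (Function.Embedding.subtype _)) (fun j => #(holders x j)) 2
      (fun j hj => by
        obtain ⟨j, -, rfl⟩ := mem_map.mp hj
        exact hx.two_le_card_holders j.2)
    have hA := hsparse (A.map (Function.Embedding.subtype _))
    have hN : (A.map (Function.Embedding.subtype _)).biUnion (holders x) =
        A.biUnion fun j => holders x j := by
      ext; simp
    rw [hN, card_map] at hA
    rw [card_map, smul_eq_mul] at h2
    omega
  obtain ⟨f, hf, hfx⟩ := (all_card_le_biUnion_card_iff_exists_injective _).mp hall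
  have hint : ∀ j, (¬ ∀ i, x i j < 1) → ∃ i, 1 ≤ x i j := fun j h => by simpa using h
  choose g hg using hint
  let X j := if h : ∀ i, x i j < 1 then f ⟨j, h⟩ else g j h
  have hfrac : ∀ j, x (X j) j < 1 → ∀ i, x i j < 1 := fun j hj => by
    by_contra h
    simp only [X, dif_neg h] at hj
    exact (hg j h).not_gt hj
  refine ⟨X, fun j => ?_, fun i => card_le_one.mpr fun a ha b hb => ?_⟩
  · by_cases h : ∀ i, x i j < 1
    · simpa [X, dif_pos h, holders] using hfx ⟨j, h⟩
    · simpa [X, dif_neg h] using one_pos.trans_le (hg j h)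
  · simp only [mem_filter, mem_univ, true_and] at ha hb
    have ha' := hfrac a (ha.1 ▸ ha.2)
    have hb' := hfrac b (hb.1 ▸ hb.2)
    have := ha.1.trans hb.1.symm
    simp only [X, dif_pos ha', dif_pos hb'] at this
    exact congrArg Subtype.val (hf this)

end IsFeasibleFraction

theorem sum_mul_add_le_sum_of_card_le_one {v y : κ → ℝ} {T : Finset κ} {τ : ℝ}
    (hv : ∀ j, v j ≤ 0) (hy₀ : ∀ j, 0 ≤ y j) (hy₁ : ∀ j, y j ≤ 1) (hτ : τ ≤ 0)
    (hT : #(T.filter fun j => y j < 1) ≤ 1) (hvT : ∀ j ∈ T, τ ≤ v j) :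
    ∑ j, v j * y j + τ ≤ ∑ j ∈ T, v j := by
  have hsub : ∑ j, v j * y j ≤ ∑ j ∈ T, v j * y j :=
    sum_le_sum_of_subset_of_nonpos' (subset_univ T) fun j _ _ =>
      mul_nonpos_of_nonpos_of_nonneg (hv j) (hy₀ j)
  have hfrac : τ ≤ ∑ j ∈ T.filter (fun j => y j < 1), v j * (1 - y j) := by
    have := card_nsmul_le_sum (T.filter fun j => y j < 1) (fun j => v j * (1 - y j)) τ
      fun j hj => by nlinarith [hvT j (mem_filter.mp hj).1, hv j, hy₀ j]
    rw [nsmul_eq_mul] at this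
    have hT' : ((#(T.filter fun j => y j < 1) : ℕ) : ℝ) ≤ 1 := by exact_mod_cast hT
    nlinarith [mul_nonpos_of_nonneg_of_nonpos (sub_nonneg.mpr hT') hτ]
  calc ∑ j, v j * y j + τ
      ≤ ∑ j ∈ T, v j * y j + ∑ j ∈ T.filter (fun j => y j < 1), v j * (1 - y j) := by linarith
    _ = ∑ j ∈ T, v j * y j + ∑ j ∈ T, v j * (1 - y j) := by
      rw [sum_filter_of_ne fun j _ h => lt_of_le_of_ne (hy₁ j) fun h1 => h (by rw [h1]; ring)]
    _ = ∑ j ∈ T, v j := by rw [← sum_add_distrib]; exact sum_congr rfl fun j _ => by ring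

end

theorem stmt_5_general {n m : ℕ} (V : Fin n → Fin m → ℝ)
    (t w : Fin n → ℝ) (hV : ∀ i j, V i j ≤ 0) (ht : ∀ i, t i ≤ 0)
    (hfeas : ∃ x : Fin n → Fin m → ℝ,
      (∀ i j, 0 ≤ x i j) ∧
      (∀ i j, V i j < t i → x i j = 0) ∧
      (∀ j, ∑ i, x i j = 1) ∧
      (∀ i, ∑ j, V i j * x i j ≥ w i)) :
    ∃ X : Fin m → Fin n,
      (∀ j, V (X j) j ≥ t (X j)) ∧
      (∀ i, bundleVal (V i) X i ≥ w i + t i) := by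
  obtain ⟨x₀, hx₀⟩ := hfeas
  obtain ⟨x, hx, hmin⟩ := WellFounded.has_min (InvImage.wf posSupport wellFounded_lt)
    {y | IsFeasibleFraction V t w y} ⟨x₀, hx₀.1, hx₀.2.1, hx₀.2.2.1, hx₀.2.2.2⟩
  obtain ⟨X, hXpos, hXfrac⟩ := hx.exists_assignment (hx.sum_card_holders_le hmin)
  have helig : ∀ j, t (X j) ≤ V (X j) j := fun j =>
    not_lt.mp fun h => (hXpos j).ne' (hx.eq_zero_of_lt _ _ h)
  refine ⟨X, helig, fun i => ?_⟩
  calc w i + t i ≤ ∑ j, V i j * x i j + t i := by linarith [hx.le_value i]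
    _ ≤ bundleVal (V i) X i := sum_mul_add_le_sum_of_card_le_one (hV i) (hx.nonneg i)
        (hx.le_one i) (ht i) (by simpa only [filter_filter] using hXfrac i)
        fun j hj => (mem_filter.mp hj).2 ▸ helig j

/-- Rounding lemma: if the restricted fractional program (variables only on eligible pairs
`V i j ≥ t i`) is feasible with targets `w i`, then there is an integral assignment of every
chore to an eligible agent giving each agent `i` total value at least `w i + t i`. -/
theorem stmt_5 {n m : ℕ} (hn : 0 < n) (V : Fin n → Fin m → ℝ)
    (t w : Fin n → ℝ) (hV : ∀ i j, V i j ≤ 0) (ht : ∀ i, t i ≤ 0) (hw : ∀ i, w i ≤ 0)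
    (hfeas : ∃ x : Fin n → Fin m → ℝ,
      (∀ i j, 0 ≤ x i j) ∧
      (∀ i j, V i j < t i → x i j = 0) ∧
      (∀ j, ∑ i, x i j = 1) ∧
      (∀ i, ∑ j, V i j * x i j ≥ w i)) :
    ∃ X : Fin m → Fin n,
      (∀ j, V (X j) j ≥ t (X j)) ∧
      (∀ i, bundleVal (V i) X i ≥ w i + t i) :=
  stmt_5_general V t w hV ht hfeas
end

section
/- For two agents with shares s_1 ≤ 1/3 ≤ 2/3 ≤ s_2 and normalized additive valuations (V_i(M) = -1), the allocation X_1 = ∅, X_2 = M satisfies V_i(X_i) ≥ (3/2)·WMMS_i for both agents. -/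
/-!
Every partition has a bundle `k` with `V(X_k) / s_k ≤ V(M) / Σ s = -1`, since the ratios
`V(X_k) / s_k` average to `-1` with weights `s_k`; hence `WMMS_i ≤ -s_i`. Giving all chores
to agent `1` leaves agent `0` with value `0 ≥ (3/2) WMMS_0`, and gives agent `1` value
`-1 ≥ (3/2) (-2/3) ≥ (3/2) WMMS_1`.
-/

open Finset

section BundleVal

variable {n m : ℕ} (V : Fin m → ℝ)

theorem sum_bundleVal (X : Fin m → Fin n) : ∑ k, bundleVal V X k = ∑ j, V j :=
  sum_fiberwise_of_maps_to (fun j _ => mem_univ (X j)) V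

theorem bundleVal_const_self (k : Fin n) : bundleVal V (fun _ => k) k = ∑ j, V j := by
  simp [bundleVal]

theorem bundleVal_const_of_ne {k k' : Fin n} (h : k' ≠ k) : bundleVal V (fun _ => k) k' = 0 := by
  simp [bundleVal, h.symm]

end BundleVal

theorem inf'_div_le_sum {ι : Type*} [Fintype ι] [Nonempty ι] (b s : ι → ℝ)
    (hs_pos : ∀ k, 0 < s k) (hs_sum : ∑ k, s k = 1) :
    univ.inf' univ_nonempty (fun k => b k / s k) ≤ ∑ k, b k := by
  set c := univ.inf' univ_nonempty (fun k => b k / s k)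
  have hc : ∀ k, c * s k ≤ b k := fun k =>
    (le_div_iff₀ (hs_pos k)).mp (inf'_le _ (mem_univ k))
  calc c = ∑ k, c * s k := by rw [← mul_sum, hs_sum, mul_one]
    _ ≤ ∑ k, b k := sum_le_sum fun k _ => hc k

theorem WMMS_le_mul_sum {n m : ℕ} (hn : 0 < n) (s : Fin n → ℝ) (V : Fin m → ℝ) (i : Fin n)
    (hs_pos : ∀ k, 0 < s k) (hs_sum : ∑ k, s k = 1) :
    WMMS hn s V i ≤ s i * ∑ j, V j := by
  have : NeZero n := ⟨hn.ne'⟩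
  refine mul_le_mul_of_nonneg_left (sup'_le _ _ fun X _ => ?_) (hs_pos i).le
  simpa only [sum_bundleVal] using inf'_div_le_sum (bundleVal V X) s hs_pos hs_sum

/-- Two agents with `s 0 ≤ 1/3 ≤ 2/3 ≤ s 1` and normalized valuations: giving everything to
agent `1` is a `(3/2)`-approximation of WMMS for both agents. -/
theorem stmt_8 {m : ℕ} (s : Fin 2 → ℝ) (V : Fin 2 → Fin m → ℝ)
    (hs_pos : ∀ i, 0 < s i) (hs_sum : s 0 + s 1 = 1)
    (hs1 : 2/3 ≤ s 1)
    (hV_norm : ∀ i, ∑ j, V i j = -1) :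
    ∀ i : Fin 2, bundleVal (V i) (fun _ => 1) i
      ≥ (3/2) * WMMS (by norm_num) s (V i) i := by
  have hWMMS : ∀ i, WMMS (by norm_num) s (V i) i ≤ -s i := fun i => by
    simpa [hV_norm i] using
      WMMS_le_mul_sum (by norm_num) s (V i) i hs_pos (by rwa [Fin.sum_univ_two])
  refine Fin.forall_fin_two.mpr ⟨?_, ?_⟩
  · rw [bundleVal_const_of_ne _ zero_ne_one]
    linarith [hWMMS 0, hs_pos 0]
  · rw [bundleVal_const_self, hV_norm]
    linarith [hWMMS 1]
end

section
/- For identical uniform valuations (every chore has value -1 to every agent), any partition ⟨X_1,...,X_n⟩ produced by the greedy algorithm that assigns chores one at a time to an agent maximizing (−|X_i|−1)/s_i achieves the exact weighted maxmin value: min_k (−|X_k|)/s_k = max over all partitions Y of min_k (−|Y_k|)/s_k. Hence each agent i receives value −|X_i| ≥ WMMS_i = s_i · max_Y min_k (−|Y_k|)/s_k. -/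
open Finset

/-!
Write `c_k(Z)` for the number of chores bundle `k` receives under `Z`; the weighted maxmin value
of `Z` is `-max_k c_k(Z)/s_k`, so the claim is that greedy minimises the maximal weighted load.
Take any agent `k` that received chores and let `j` be the last one it received. Greedy chose `k`
for `j`, so `c_k(X)/s_k ≤ (p_i+1)/s_i` for every `i`, where `p_i` counts the chores before `j`
given to `i`. Since `∑ p_i = j < m = ∑ c_i(Y)`, any other partition `Y` has some `i` with
`p_i + 1 ≤ c_i(Y)`, hence `c_k(X)/s_k ≤ c_i(Y)/s_i`.
-/

section Greedy

variable {α ι : Type*} [Fintype α] [LinearOrder α] [DecidableEq ι]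

theorem exists_card_filter_lt_add_one_eq (X : α → ι) {k : ι}
    (hk : (univ.filter fun j => X j = k).Nonempty) :
    ∃ j, X j = k ∧
      (univ.filter fun j' => j' < j ∧ X j' = k).card + 1 = (univ.filter fun j => X j = k).card := by
  set j := (univ.filter fun j => X j = k).max' hk
  have hj : j ∈ univ.filter fun j => X j = k := max'_mem _ hk
  refine ⟨j, (mem_filter.mp hj).2, ?_⟩
  rw [← card_erase_add_one hj]
  congr 2
  ext j'
  simp only [mem_filter, mem_univ, true_and, mem_erase]
  constructor
  · rintro ⟨hlt, hXj'⟩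
    exact ⟨hlt.ne, hXj'⟩
  · rintro ⟨hne, hXj'⟩
    exact ⟨lt_of_le_of_ne (le_max' _ j' (by simpa using hXj')) hne, hXj'⟩

theorem exists_card_filter_lt_lt_card_filter [Fintype ι] (X Y : α → ι) (j : α) :
    ∃ i, (univ.filter fun j' => j' < j ∧ X j' = i).card < (univ.filter fun j' => Y j' = i).card := by
  have hbefore : ∑ i, (univ.filter fun j' => j' < j ∧ X j' = i).card
      = (univ.filter fun j' => j' < j).card := by
    simp_rw [← filter_filter]
    exact (card_eq_sum_card_fiberwise fun _ _ => mem_univ _).symm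
  have hall : ∑ i, (univ.filter fun j' => Y j' = i).card = Fintype.card α :=
    (card_eq_sum_card_fiberwise fun _ _ => mem_univ _).symm
  have hsum : ∑ i, (univ.filter fun j' => j' < j ∧ X j' = i).card
      < ∑ i, (univ.filter fun j' => Y j' = i).card := by
    rw [hbefore, hall]
    exact card_lt_univ_of_notMem (x := j) (by simp)
  obtain ⟨i, -, hi⟩ := exists_lt_of_sum_lt hsum
  exact ⟨i, hi⟩

noncomputable def load (s : ι → ℝ) (Z : α → ι) (k : ι) : ℝ :=
  (univ.filter fun j => Z j = k).card / s k

def IsGreedy (s : ι → ℝ) (X : α → ι) : Prop :=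
  ∀ j i, ((univ.filter fun j' => j' < j ∧ X j' = X j).card + 1 : ℝ) / s (X j) ≤
    ((univ.filter fun j' => j' < j ∧ X j' = i).card + 1) / s i

theorem exists_load_le_load_of_greedy [Fintype ι] {s : ι → ℝ} (hs : ∀ i, 0 ≤ s i) {X : α → ι}
    (hgreedy : IsGreedy s X) (Y : α → ι) (k : ι) : ∃ i, load s X k ≤ load s Y i := by
  rcases (univ.filter fun j => X j = k).eq_empty_or_nonempty with hempty | hk
  · refine ⟨k, ?_⟩
    rw [load, hempty, card_empty, Nat.cast_zero, zero_div]
    exact div_nonneg (Nat.cast_nonneg _) (hs k)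
  obtain ⟨j, hXj, hcard⟩ := exists_card_filter_lt_add_one_eq X hk
  obtain ⟨i, hi⟩ := exists_card_filter_lt_lt_card_filter X Y j
  refine ⟨i, ?_⟩
  calc load s X k
      = ((univ.filter fun j' => j' < j ∧ X j' = X j).card + 1 : ℝ) / s (X j) := by
        rw [load, ← hcard, hXj]; push_cast; rfl
    _ ≤ ((univ.filter fun j' => j' < j ∧ X j' = i).card + 1) / s i := hgreedy j i
    _ ≤ load s Y i := by
        rw [load]
        gcongr
        · exact hs i
        · exact_mod_cast hi

end Greedy

theorem bundleVal_neg_one_div {n m : ℕ} (s : Fin n → ℝ) (Z : Fin m → Fin n) (k : Fin n) :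
    bundleVal (fun _ : Fin m => (-1:ℝ)) Z k / s k = -load s Z k := by
  simp [bundleVal, load, neg_div]

theorem stmt_11_general {n m : ℕ} (hn : 0 < n) (s : Fin n → ℝ) (hs_pos : ∀ i, 0 < s i)
    (X : Fin m → Fin n)
    (hgreedy : ∀ j : Fin m, ∀ i : Fin n,
      (-(((Finset.univ.filter (fun j' => j' < j ∧ X j' = X j)).card : ℝ)) - 1) / s (X j) ≥
      (-(((Finset.univ.filter (fun j' => j' < j ∧ X j' = i)).card : ℝ)) - 1) / s i) :
    haveI : NeZero n := ⟨hn.ne'⟩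
    ((Finset.univ : Finset (Fin n)).inf' Finset.univ_nonempty
        (fun k => bundleVal (fun _ : Fin m => (-1:ℝ)) X k / s k) =
      (Finset.univ : Finset (Fin m → Fin n)).sup' Finset.univ_nonempty
        (fun Y => (Finset.univ : Finset (Fin n)).inf' Finset.univ_nonempty
          (fun k => bundleVal (fun _ : Fin m => (-1:ℝ)) Y k / s k))) ∧
    ∀ i, bundleVal (fun _ : Fin m => (-1:ℝ)) X i ≥ WMMS hn s (fun _ : Fin m => (-1:ℝ)) i := by
  have : NeZero n := ⟨hn.ne'⟩
  have hX : IsGreedy s X := fun j i => by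
    have h := hgreedy j i
    rw [← neg_add', ← neg_add', neg_div, neg_div] at h
    linarith
  have hopt : ∀ Y : Fin m → Fin n,
      univ.inf' univ_nonempty (fun k => bundleVal (fun _ : Fin m => (-1:ℝ)) Y k / s k) ≤
        univ.inf' univ_nonempty (fun k => bundleVal (fun _ : Fin m => (-1:ℝ)) X k / s k) :=
    fun Y => le_inf' _ _ fun k _ => by
      obtain ⟨i, hi⟩ := exists_load_le_load_of_greedy (fun i => (hs_pos i).le) hX Y k
      refine inf'_le_of_le _ (mem_univ i) ?_
      rw [bundleVal_neg_one_div, bundleVal_neg_one_div]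
      exact neg_le_neg hi
  have hmax := le_antisymm (le_sup' _ (mem_univ X)) (sup'_le _ _ fun Y _ => hopt Y)
  refine ⟨hmax, fun i => ?_⟩
  rw [WMMS, ← hmax, ge_iff_le, ← le_div_iff₀' (hs_pos i)]
  exact inf'_le _ (mem_univ i)

/-- For uniform identical valuations (every chore worth `-1`), any assignment `X` satisfying
the greedy property (each chore `j` goes to an agent maximizing `(-|X_i|-1)/s_i` at the time
it is processed) achieves the exact weighted maxmin value, and every agent receives at least
her WMMS. -/
theorem stmt_11 {n m : ℕ} (hn : 0 < n) (s : Fin n → ℝ) (hs_pos : ∀ i, 0 < s i)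
    (hs_sum : ∑ i, s i = 1) (X : Fin m → Fin n)
    (hgreedy : ∀ j : Fin m, ∀ i : Fin n,
      (-(((Finset.univ.filter (fun j' => j' < j ∧ X j' = X j)).card : ℝ)) - 1) / s (X j) ≥
      (-(((Finset.univ.filter (fun j' => j' < j ∧ X j' = i)).card : ℝ)) - 1) / s i) :
    haveI : NeZero n := ⟨hn.ne'⟩
    ((Finset.univ : Finset (Fin n)).inf' Finset.univ_nonempty
        (fun k => bundleVal (fun _ : Fin m => (-1:ℝ)) X k / s k) =
      (Finset.univ : Finset (Fin m → Fin n)).sup' Finset.univ_nonempty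
        (fun Y => (Finset.univ : Finset (Fin n)).inf' Finset.univ_nonempty
          (fun k => bundleVal (fun _ : Fin m => (-1:ℝ)) Y k / s k))) ∧
    ∀ i, bundleVal (fun _ : Fin m => (-1:ℝ)) X i ≥ WMMS hn s (fun _ : Fin m => (-1:ℝ)) i :=
  stmt_11_general hn s hs_pos X hgreedy
end

section
/- For binary valuations (V_{ij} ∈ {0,−1}), a WMMS allocation always exists: there is a partition ⟨X_1,...,X_n⟩ of M such that V_i(X_i) ≥ WMMS_i for every agent i. -/
/-!
Let `W j` be the best value any agent gives chore `j`. Since `V i ≤ W`, every share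
`WMMS_i(V i)` is at most `WMMS_i(W)`, and a partition `Y` that is optimal for the common
valuation `W` meets all these shares at once. For binary valuations, a chore with `W j ≠ 0`
is valued `-1` by everybody, while a chore with `W j = 0` can be handed to an agent who values
it `0` without changing any `W`-bundle. After this reassignment every agent values her own
bundle exactly as `W` does, i.e. at least `WMMS_i(W)`.
-/

open Finset

variable {n m : ℕ}

lemma bundleVal_mono {V W : Fin m → ℝ} (h : V ≤ W) (X : Fin m → Fin n) (k : Fin n) :
    bundleVal V X k ≤ bundleVal W X k :=
  sum_le_sum fun j _ => h j

lemma bundleVal_congr_left {V W : Fin m → ℝ} {X : Fin m → Fin n} {k : Fin n}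
    (h : ∀ j, X j = k → V j = W j) : bundleVal V X k = bundleVal W X k :=
  sum_congr rfl fun j hj => h j (mem_filter.mp hj).2

lemma bundleVal_congr_right {W : Fin m → ℝ} {X Y : Fin m → Fin n}
    (h : ∀ j, W j ≠ 0 → X j = Y j) (k : Fin n) : bundleVal W X k = bundleVal W Y k := by
  unfold bundleVal
  rw [sum_filter, sum_filter]
  refine sum_congr rfl fun j _ => ?_
  by_cases hW : W j = 0
  · simp [hW]
  · rw [h j hW]

lemma WMMS_mono (hn : 0 < n) {s : Fin n → ℝ} (hs : ∀ k, 0 < s k) {V W : Fin m → ℝ}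
    (h : V ≤ W) (i : Fin n) : WMMS hn s V i ≤ WMMS hn s W i := by
  unfold WMMS
  refine mul_le_mul_of_nonneg_left (sup'_mono_fun fun X _ => inf'_mono_fun fun k _ => ?_)
    (hs i).le
  exact div_le_div_of_nonneg_right (bundleVal_mono h X k) (hs k).le

/-- For identical valuations an exact WMMS partition exists: any maximiser in the definition. -/
lemma exists_forall_WMMS_le_bundleVal (hn : 0 < n) {s : Fin n → ℝ} (hs : ∀ k, 0 < s k)
    (W : Fin m → ℝ) : ∃ Y : Fin m → Fin n, ∀ i, WMMS hn s W i ≤ bundleVal W Y i := by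
  have : NeZero n := ⟨hn.ne'⟩
  obtain ⟨Y, -, hY⟩ := exists_mem_eq_sup' univ_nonempty
    (fun Y : Fin m → Fin n => univ.inf' univ_nonempty fun k => bundleVal W Y k / s k)
  refine ⟨Y, fun i => ?_⟩
  calc WMMS hn s W i = s i * univ.inf' univ_nonempty (fun k => bundleVal W Y k / s k) := by
        rw [WMMS, hY]
    _ ≤ s i * (bundleVal W Y i / s i) :=
        mul_le_mul_of_nonneg_left (inf'_le _ (mem_univ i)) (hs i).le
    _ = bundleVal W Y i := mul_div_cancel₀ _ (hs i).ne'

theorem exists_WMMS_allocation_of_le (hn : 0 < n) {s : Fin n → ℝ} (hs : ∀ k, 0 < s k)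
    {V : Fin n → Fin m → ℝ} {W : Fin m → ℝ} (hle : ∀ i, V i ≤ W)
    (hattain : ∀ j, W j = 0 → ∃ i, V i j = 0) (hagree : ∀ j, W j ≠ 0 → ∀ i, V i j = W j) :
    ∃ X : Fin m → Fin n, ∀ i, WMMS hn s (V i) i ≤ bundleVal (V i) X i := by
  classical
  obtain ⟨Y, hY⟩ := exists_forall_WMMS_le_bundleVal hn hs W
  let X : Fin m → Fin n := fun j => if h : W j = 0 then (hattain j h).choose else Y j
  have hXY : ∀ j, W j ≠ 0 → X j = Y j := fun j hj => dif_neg hj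
  have hown : ∀ i j, X j = i → V i j = W j := by
    intro i j hj
    by_cases hW : W j = 0
    · have hXj : X j = (hattain j hW).choose := dif_pos hW
      rw [hW, ← hj, hXj]
      exact (hattain j hW).choose_spec
    · exact hagree j hW i
  refine ⟨X, fun i => ?_⟩
  calc WMMS hn s (V i) i ≤ WMMS hn s W i := WMMS_mono hn hs (hle i) i
    _ ≤ bundleVal W Y i := hY i
    _ = bundleVal W X i := (bundleVal_congr_right hXY i).symm
    _ = bundleVal (V i) X i := (bundleVal_congr_left (hown i)).symm

theorem stmt_12_general {n m : ℕ} (hn : 0 < n) (s : Fin n → ℝ) (V : Fin n → Fin m → ℝ)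
    (hs_pos : ∀ i, 0 < s i)
    (hbin : ∀ i j, V i j = 0 ∨ V i j = -1) :
    ∃ X : Fin m → Fin n, ∀ i, bundleVal (V i) X i ≥ WMMS hn s (V i) i := by
  classical
  let W : Fin m → ℝ := fun j => if ∀ i, V i j = -1 then -1 else 0
  refine exists_WMMS_allocation_of_le hn hs_pos (W := W) (fun i j => ?_) (fun j hj => ?_)
    (fun j hj i => ?_)
  · by_cases h : ∀ i, V i j = -1
    · simp [W, h]
    · rcases hbin i j with hv | hv <;> simp [W, h, hv]
  · obtain ⟨i, hi⟩ := not_forall.mp fun h : ∀ i, V i j = -1 => by simp [W, h] at hj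
    exact ⟨i, (hbin i j).resolve_right hi⟩
  · have h : ∀ i, V i j = -1 := by by_contra h; simp [W, h] at hj
    simp [W, h]

/-- For binary valuations (`V i j ∈ {0, -1}`), a WMMS allocation always exists. -/
theorem stmt_12 {n m : ℕ} (hn : 0 < n) (s : Fin n → ℝ) (V : Fin n → Fin m → ℝ)
    (hs_pos : ∀ i, 0 < s i) (hs_sum : ∑ i, s i = 1)
    (hbin : ∀ i j, V i j = 0 ∨ V i j = -1) :
    ∃ X : Fin m → Fin n, ∀ i, bundleVal (V i) X i ≥ WMMS hn s (V i) i :=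
  stmt_12_general hn s V hs_pos hbin
end

section
/- Round-robin selection can be unboundedly bad for WMMS with asymmetric shares: in the family of instances above (shares s_i = n/(n+1)^{n−i+1}, n² chores in n value-tiers), under round-robin each agent receives one chore from each tier, so agent 1 gets value −1/n · (normalizing constant), while WMMS_1 = −n/(n+1)^n; the ratio V_1(X_1)/WMMS_1 = (1/n)/(n/(n+1)^n) = (n+1)^n/n² tends to infinity as n → ∞. -/
/-! Round robin hands every agent a chore of the worst tier, worth `-1/(n+1)`, whereas the
partition into tiers is proportional (bundle `k` is worth exactly `-s k`), so
`-s 0 ≤ WMMS_0 ≤ 0` with `s 0 = n/(n+1)^n`. As `n²/(n+1)^n` is eventually far below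
`1/(n+1)`, no constant multiple of `WMMS_0` bounds the round-robin bundle. -/

open Finset

section Chores

variable {n m : ℕ} {V : Fin m → ℝ}

theorem bundleVal_le_of_mem (hV : ∀ j, V j ≤ 0) (X : Fin m → Fin n) {j : Fin m} :
    bundleVal V X (X j) ≤ V j := by
  have hj : j ∈ univ.filter (fun j' => X j' = X j) := by simp
  rw [bundleVal, ← add_sum_erase _ V hj]
  have := sum_nonpos fun j' (_ : j' ∈ (univ.filter fun j' => X j' = X j).erase j) => hV j'
  linarith

theorem WMMS_nonpos (hn : 0 < n) {s : Fin n → ℝ} (hV : ∀ j, V j ≤ 0) {i : Fin n}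
    (hsi : 0 ≤ s i) : WMMS hn s V i ≤ 0 := by
  have : NeZero n := ⟨hn.ne'⟩
  refine mul_nonpos_of_nonneg_of_nonpos hsi (sup'_le _ _ fun X _ => ?_)
  exact (inf'_le _ (mem_univ i)).trans
    (div_nonpos_of_nonpos_of_nonneg (sum_nonpos fun j _ => hV j) hsi)

theorem neg_le_WMMS_of_partition (hn : 0 < n) {s : Fin n → ℝ} (hs : ∀ k, 0 < s k)
    (Y : Fin m → Fin n) (hY : ∀ k, -s k ≤ bundleVal V Y k) (i : Fin n) :
    -s i ≤ WMMS hn s V i := by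
  have : NeZero n := ⟨hn.ne'⟩
  have hM : -1 ≤ (univ : Finset (Fin m → Fin n)).sup' univ_nonempty
      (fun X => (univ : Finset (Fin n)).inf' univ_nonempty (fun k => bundleVal V X k / s k)) :=
    le_sup'_of_le _ (mem_univ Y) <| le_inf' _ _ fun k _ => by
      rw [le_div_iff₀ (hs k)]
      linarith [hY k]
  rw [WMMS]
  nlinarith [hs i]

end Chores

section Tiers

variable {n : ℕ}

def tierPartition (n : ℕ) (j : Fin (n * n)) : Fin n :=
  ⟨j.val / n, Nat.div_lt_of_lt_mul j.isLt⟩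

theorem bundleVal_tierPartition (v : ℕ → ℝ) (k : Fin n) :
    bundleVal (fun j : Fin (n * n) => v (j.val / n)) (tierPartition n) k = n * v k := by
  rw [bundleVal, sum_filter, ← finProdFinEquiv.sum_comp, Fintype.sum_prod_type]
  have hdiv : ∀ (a b : Fin n), (b.val + n * a.val) / n = a.val := fun a b => by
    rw [Nat.add_mul_div_left _ _ (Fin.pos b), Nat.div_eq_of_lt b.isLt, zero_add]
  simp [tierPartition, finProdFinEquiv, hdiv]

theorem bundleVal_roundRobin_le (hn : 0 < n) {v : ℕ → ℝ} (hv : ∀ t, v t ≤ 0) (k : Fin n) :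
    bundleVal (fun j : Fin (n * n) => v (j.val / n))
      (fun j => ⟨j.val % n, Nat.mod_lt _ hn⟩) k ≤ v (n - 1) := by
  have hlt : (n - 1) * n + k.val < n * n := by
    have := k.isLt
    calc (n - 1) * n + k.val < (n - 1) * n + n := by omega
      _ = n * n := by rw [← Nat.succ_mul, Nat.succ_eq_add_one, Nat.sub_add_cancel hn]
  have hmod : ((n - 1) * n + k.val) % n = k.val := by
    rw [Nat.mul_comm, Nat.mul_add_mod, Nat.mod_eq_of_lt k.isLt]
  have hdiv : ((n - 1) * n + k.val) / n = n - 1 := by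
    rw [Nat.add_comm, Nat.add_mul_div_right _ _ hn, Nat.div_eq_of_lt k.isLt, zero_add]
  have hk : (⟨((n - 1) * n + k.val) % n, Nat.mod_lt _ hn⟩ : Fin n) = k := Fin.ext hmod
  simpa only [hk, hdiv] using
    bundleVal_le_of_mem (V := fun j : Fin (n * n) => v (j.val / n)) (fun j => hv _)
      (fun j => ⟨j.val % n, Nat.mod_lt _ hn⟩) (j := ⟨(n - 1) * n + k.val, hlt⟩)

end Tiers

theorem mul_div_pow_lt_inv_succ {c : ℝ} {n : ℕ} (hn : 3 ≤ n) (hc : c ≤ n) :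
    c * (n / ((n : ℝ) + 1) ^ n) < 1 / ((n : ℝ) + 1) := by
  have hN : (3 : ℝ) ≤ n := by exact_mod_cast hn
  have hpow : ((n : ℝ) + 1) ^ 3 ≤ ((n : ℝ) + 1) ^ n :=
    pow_le_pow_right₀ (by linarith) hn
  have hcn : c * n ≤ n * n := mul_le_mul_of_nonneg_right hc (by linarith)
  rw [mul_div_assoc', div_lt_div_iff₀ (by positivity) (by positivity)]
  nlinarith

/-- Round-robin is unboundedly bad for WMMS with asymmetric shares: for every constant `C`
there is an `n` such that, in the tiered instance (shares `s i = n/(n+1)^(n-i)`, `n²` chores,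
tier `t` worth `-1/(n+1)^(n-t)`), the round-robin allocation (chore `j` to agent `j mod n`,
so each agent gets one chore per tier) gives agent `0` value less than `C · WMMS_0`. -/
theorem stmt_18 :
    ∀ C : ℝ, ∃ n : ℕ, ∃ hn : 0 < n,
      let s : Fin n → ℝ := fun i => (n : ℝ) / ((n:ℝ)+1)^(n - i.val)
      let V : Fin (n*n) → ℝ := fun j => -(1 / ((n:ℝ)+1)^(n - j.val / n))
      let X : Fin (n*n) → Fin n := fun j => ⟨j.val % n, Nat.mod_lt _ hn⟩
      bundleVal V X ⟨0, hn⟩ < C * WMMS hn s V ⟨0, hn⟩ := by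
  intro C
  set n := max 3 ⌈|C|⌉₊
  have hn3 : 3 ≤ n := le_max_left _ _
  have hCn : |C| ≤ n := (Nat.le_ceil _).trans (Nat.cast_le.mpr (le_max_right _ _))
  have hn : 0 < n := by omega
  refine ⟨n, hn, ?_⟩
  intro s V X
  set v : ℕ → ℝ := fun t => -(1 / ((n : ℝ) + 1) ^ (n - t))
  have hv : ∀ t, v t ≤ 0 := fun t => neg_nonpos.mpr (by positivity)
  have hs : ∀ k, 0 < s k := fun k => by positivity
  have hround : bundleVal V X ⟨0, hn⟩ ≤ -(1 / ((n : ℝ) + 1)) := by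
    refine (bundleVal_roundRobin_le (v := v) hn hv _).trans_eq ?_
    simp only [v, Nat.sub_sub_self (show 1 ≤ n by omega), pow_one]
  have hlow : -s ⟨0, hn⟩ ≤ WMMS hn s V ⟨0, hn⟩ :=
    neg_le_WMMS_of_partition hn hs (tierPartition n)
      (fun k => by rw [bundleVal_tierPartition v k, mul_neg, mul_one_div]) _
  have hup : WMMS hn s V ⟨0, hn⟩ ≤ 0 := WMMS_nonpos hn (fun j => hv _) (hs _).le
  have hprod : -(|C| * s ⟨0, hn⟩) ≤ C * WMMS hn s V ⟨0, hn⟩ := by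
    have hW : |WMMS hn s V ⟨0, hn⟩| ≤ s ⟨0, hn⟩ := abs_le.mpr ⟨hlow, hup.trans (hs _).le⟩
    calc -(|C| * s ⟨0, hn⟩) ≤ -|C * WMMS hn s V ⟨0, hn⟩| := by
          rw [abs_mul]; exact neg_le_neg (mul_le_mul_of_nonneg_left hW (abs_nonneg C))
      _ ≤ _ := neg_abs_le _
  have hsmall : |C| * s ⟨0, hn⟩ < 1 / ((n : ℝ) + 1) := mul_div_pow_lt_inv_succ hn3 hCn
  linarith
end

section
/- If a bipartite graph between agents and chores is a pseudoforest (each connected component is a tree or a tree plus one edge) and every chore vertex has degree at least 2, then the graph contains a matching that covers (saturates) all chore vertices. -/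
open Finset

namespace SimpleGraph

theorem connectedComponentMk_eq_of_mem_edgeSet {V : Type*} {G : SimpleGraph V} {e : Sym2 V}
    (he : e ∈ G.edgeSet) {v w : V} (hv : v ∈ e) (hw : w ∈ e) :
    G.connectedComponentMk v = G.connectedComponentMk w := by
  induction e using Sym2.ind with
  | h x y =>
  have hxy : G.connectedComponentMk x = G.connectedComponentMk y :=
    ConnectedComponent.connectedComponentMk_eq_of_adj he
  rcases Sym2.mem_iff.1 hv with rfl | rfl <;> rcases Sym2.mem_iff.1 hw with rfl | rfl
  exacts [rfl, hxy, hxy.symm, rfl]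

theorem card_le_card_edges_meeting_of_reachable_outside {V : Type*} [Fintype V] [DecidableEq V]
    (G : SimpleGraph V) [DecidableRel G.Adj] (S : Finset V)
    (hS : ∀ v ∈ S, ∃ w ∉ S, G.Reachable v w) :
    #S ≤ #{e ∈ G.edgeFinset | ∃ v ∈ S, v ∈ e} := by
  induction S using Finset.strongInduction with
  | H S ih =>
  rcases S.eq_empty_or_nonempty with rfl | ⟨v₀, hv₀⟩
  · simp
  obtain ⟨w, hwS, ⟨p⟩⟩ := hS v₀ hv₀
  obtain ⟨⟨⟨x, y⟩, hxy⟩, -, hx, hy⟩ := p.exists_boundary_dart (S : Set V) hv₀ hwS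
  have hS' : ∀ v ∈ S.erase x, ∃ w ∉ S.erase x, G.Reachable v w := fun v hv ↦
    (hS v (mem_of_mem_erase hv)).imp fun w ⟨hw, hvw⟩ ↦ ⟨fun h ↦ hw (mem_of_mem_erase h), hvw⟩
  calc #S = #(S.erase x) + 1 := (card_erase_add_one hx).symm
    _ ≤ #{e ∈ G.edgeFinset | ∃ v ∈ S.erase x, v ∈ e} + 1 :=
        Nat.add_le_add_right (ih _ (erase_ssubset hx) hS') 1
    _ = #(insert s(x, y) {e ∈ G.edgeFinset | ∃ v ∈ S.erase x, v ∈ e}) := by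
        rw [card_insert_of_notMem]
        simp only [mem_filter, mem_erase, Sym2.mem_iff, not_and, not_exists]
        rintro - v ⟨hvx, hvS⟩ (rfl | rfl)
        exacts [hvx rfl, hy hvS]
    _ ≤ #{e ∈ G.edgeFinset | ∃ v ∈ S, v ∈ e} := by
        refine card_le_card (insert_subset ?_ fun e he ↦ ?_)
        · exact mem_filter.2 ⟨G.mem_edgeFinset.2 hxy, x, hx, Sym2.mem_mk_left x y⟩
        · obtain ⟨he, v, hv, hve⟩ := mem_filter.1 he
          exact mem_filter.2 ⟨he, v, mem_of_mem_erase hv, hve⟩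

def IsPseudoforest {V : Type*} (G : SimpleGraph V) : Prop :=
  ∀ c : G.ConnectedComponent, {e ∈ G.edgeSet | ∀ v ∈ e, G.connectedComponentMk v = c}.ncard ≤
    {v : V | G.connectedComponentMk v = c}.ncard

namespace IsPseudoforest

variable {V : Type*} [Fintype V] [DecidableEq V] {G : SimpleGraph V} [DecidableRel G.Adj]

section

variable [DecidableEq G.ConnectedComponent]

theorem card_edges_le (hG : G.IsPseudoforest) (c : G.ConnectedComponent) :
    #{e ∈ G.edgeFinset | ∀ v ∈ e, G.connectedComponentMk v = c} ≤
      #{v | G.connectedComponentMk v = c} := by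
  simpa only [← Set.ncard_coe_finset, coe_filter, mem_coe, mem_edgeFinset, mem_univ, true_and]
    using hG c

theorem card_edges_inside_component_le (hG : G.IsPseudoforest) (c : G.ConnectedComponent)
    (W : Finset V) :
    #{e ∈ G.edgeFinset | ∀ v ∈ e, G.connectedComponentMk v = c ∧ v ∈ W} ≤
      #{v ∈ W | G.connectedComponentMk v = c} := by
  set inside := {e ∈ G.edgeFinset | ∀ v ∈ e, G.connectedComponentMk v = c ∧ v ∈ W}
  by_cases hWc : ∃ w ∈ W, G.connectedComponentMk w = c
  swap
  · push Not at hWc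
    have hempty : inside = ∅ := filter_eq_empty_iff.2 fun e _ he ↦
      hWc _ (he _ (Sym2.out_fst_mem e)).2 (he _ (Sym2.out_fst_mem e)).1
    simp [hempty]
  obtain ⟨w, hw, hwc⟩ := hWc
  set outside : Finset V := {v | G.connectedComponentMk v = c ∧ v ∉ W}
  set meeting := {e ∈ G.edgeFinset | ∃ v ∈ outside, v ∈ e}
  have houtside : ∀ v ∈ outside, ∃ w ∉ outside, G.Reachable v w := fun v hv ↦
    ⟨w, by simp [outside, hw], ConnectedComponent.exact ((mem_filter.1 hv).2.1.trans hwc.symm)⟩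
  have hdisj : Disjoint inside meeting :=
    disjoint_filter.2 fun e _ heW ⟨v, hv, hve⟩ ↦ (mem_filter.1 hv).2.2 (heW v hve).2
  have hsub : inside ∪ meeting ⊆ {e ∈ G.edgeFinset | ∀ v ∈ e, G.connectedComponentMk v = c} := by
    refine union_subset (fun e he ↦ ?_) (fun e he ↦ ?_) <;>
      simp only [inside, meeting, mem_filter] at he ⊢
    · exact ⟨he.1, fun v hv ↦ (he.2 v hv).1⟩
    · obtain ⟨he, v, hv, hve⟩ := he
      exact ⟨he, fun u hu ↦ (connectedComponentMk_eq_of_mem_edgeSet (mem_edgeFinset.1 he) hu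
        hve).trans (mem_filter.1 hv).2.1⟩
  have hsplit : #{v | G.connectedComponentMk v = c} =
      #{v ∈ W | G.connectedComponentMk v = c} + #outside := by
    have hdisjV : Disjoint {v ∈ W | G.connectedComponentMk v = c} outside :=
      Finset.disjoint_left.2 fun v hvW hv ↦ (mem_filter.1 hv).2.2 (mem_filter.1 hvW).1
    rw [← card_union_of_disjoint hdisjV]
    congr 1
    ext v
    simp only [mem_filter, mem_univ, true_and, mem_union, outside]
    tauto
  have : #inside + #outside ≤ #{v ∈ W | G.connectedComponentMk v = c} + #outside :=
    calc #inside + #outside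
        ≤ #inside + #meeting := by
          gcongr
          exact G.card_le_card_edges_meeting_of_reachable_outside outside houtside
      _ = #(inside ∪ meeting) := (card_union_of_disjoint hdisj).symm
      _ ≤ #{e ∈ G.edgeFinset | ∀ v ∈ e, G.connectedComponentMk v = c} := card_le_card hsub
      _ ≤ #{v | G.connectedComponentMk v = c} := hG.card_edges_le c
      _ = #{v ∈ W | G.connectedComponentMk v = c} + #outside := hsplit
  exact Nat.le_of_add_le_add_right this

end

theorem card_edges_inside_le (hG : G.IsPseudoforest) (W : Finset V) :
    #{e ∈ G.edgeFinset | ∀ v ∈ e, v ∈ W} ≤ #W := by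
  classical
  calc #{e ∈ G.edgeFinset | ∀ v ∈ e, v ∈ W}
      ≤ #(univ.biUnion fun c ↦
          {e ∈ G.edgeFinset | ∀ v ∈ e, G.connectedComponentMk v = c ∧ v ∈ W}) := by
        refine card_le_card fun e he ↦ ?_
        obtain ⟨he, heW⟩ := mem_filter.1 he
        exact mem_biUnion.2 ⟨G.connectedComponentMk e.out.1, mem_univ _, mem_filter.2 ⟨he,
          fun v hv ↦ ⟨connectedComponentMk_eq_of_mem_edgeSet (mem_edgeFinset.1 he) hv
            (Sym2.out_fst_mem e), heW v hv⟩⟩⟩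
    _ ≤ ∑ c, #{e ∈ G.edgeFinset | ∀ v ∈ e, G.connectedComponentMk v = c ∧ v ∈ W} :=
        card_biUnion_le
    _ ≤ ∑ c, #{v ∈ W | G.connectedComponentMk v = c} :=
        sum_le_sum fun c _ ↦ hG.card_edges_inside_component_le c W
    _ = #W := (card_eq_sum_card_fiberwise fun v _ ↦ mem_univ _).symm

end IsPseudoforest

section Bipartite

variable {α β : Type*} [Fintype α] [Fintype β] [DecidableEq α] [DecidableEq β]
  (G : SimpleGraph (α ⊕ β)) [DecidableRel G.Adj]

def inlNeighborFinset (b : β) : Finset α := {a | G.Adj (.inl a) (.inr b)}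

theorem sum_degree_inr_le_card_edges_inside (hbipR : ∀ b b' : β, ¬ G.Adj (.inr b) (.inr b'))
    (s : Finset β) :
    ∑ b ∈ s, G.degree (.inr b) ≤
      #{e ∈ G.edgeFinset | ∀ v ∈ e, v ∈ (s.biUnion G.inlNeighborFinset).disjSum s} := by
  have hdisj : (s : Set β).PairwiseDisjoint fun b ↦ G.incidenceFinset (.inr b) := by
    intro b₁ _ b₂ _ hne
    refine Finset.disjoint_left.2 fun e he₁ he₂ ↦ ?_
    rw [mem_incidenceFinset] at he₁ he₂
    have he : e = s(.inr b₁, .inr b₂) :=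
      G.incidenceSet_inter_incidenceSet_subset (Sum.inr_injective.ne hne) ⟨he₁, he₂⟩
    rw [he] at he₁
    exact hbipR b₁ b₂ (G.incidenceSet_subset _ he₁)
  calc ∑ b ∈ s, G.degree (.inr b) = #(s.biUnion fun b ↦ G.incidenceFinset (.inr b)) := by
        rw [card_biUnion hdisj]
        simp only [card_incidenceFinset_eq_degree]
    _ ≤ _ := by
        refine card_le_card fun e he ↦ ?_
        obtain ⟨b, hb, he⟩ := mem_biUnion.1 he
        obtain ⟨heG, hbe⟩ := (G.mem_incidenceFinset _ _).1 he
        obtain ⟨u, rfl⟩ := Sym2.mem_iff_exists.1 hbe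
        refine mem_filter.2 ⟨mem_edgeFinset.2 heG, fun v hv ↦ ?_⟩
        rcases Sym2.mem_iff.1 hv with rfl | rfl
        · exact inr_mem_disjSum.2 hb
        · rcases v with a | b'
          · exact inl_mem_disjSum.2 (mem_biUnion.2 ⟨b, hb, mem_filter.2 ⟨mem_univ _, heG.symm⟩⟩)
          · exact absurd heG (hbipR b b')

theorem card_le_card_biUnion_inlNeighborFinset (hbipR : ∀ b b' : β, ¬ G.Adj (.inr b) (.inr b'))
    (hG : G.IsPseudoforest) (hdeg : ∀ b : β, 2 ≤ G.degree (.inr b)) (s : Finset β) :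
    #s ≤ #(s.biUnion G.inlNeighborFinset) := by
  have hdeg_sum : 2 * #s ≤ ∑ b ∈ s, G.degree (.inr b) := by
    simpa [mul_comm] using card_nsmul_le_sum s _ 2 fun b _ ↦ hdeg b
  have := (G.sum_degree_inr_le_card_edges_inside hbipR s).trans (hG.card_edges_inside_le _)
  rw [card_disjSum] at this
  omega

end Bipartite

end SimpleGraph

theorem stmt_19_general {α β : Type*} [Fintype α] [Fintype β] [DecidableEq α] [DecidableEq β]
    (G : SimpleGraph (α ⊕ β)) [DecidableRel G.Adj]
    (hbipR : ∀ b b' : β, ¬ G.Adj (Sum.inr b) (Sum.inr b'))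
    (hpseudo : ∀ c : G.ConnectedComponent,
      {e ∈ G.edgeSet | ∀ v ∈ e, G.connectedComponentMk v = c}.ncard ≤
        {v : α ⊕ β | G.connectedComponentMk v = c}.ncard)
    (hdeg : ∀ b : β, 2 ≤ G.degree (Sum.inr b)) :
    ∃ f : β → α, Function.Injective f ∧ ∀ b, G.Adj (Sum.inl (f b)) (Sum.inr b) := by
  obtain ⟨f, hf, hfG⟩ := (all_card_le_biUnion_card_iff_exists_injective G.inlNeighborFinset).1
    (G.card_le_card_biUnion_inlNeighborFinset hbipR hpseudo hdeg)
  exact ⟨f, hf, fun b ↦ (mem_filter.1 (hfG b)).2⟩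

/-- If a bipartite graph between agents `α` and chores `β` is a pseudoforest (each connected
component has at most as many edges as vertices) and every chore vertex has degree at least
`2`, then there is a matching saturating all chore vertices. -/
theorem stmt_19 {α β : Type*} [Fintype α] [Fintype β] [DecidableEq α] [DecidableEq β]
    (G : SimpleGraph (α ⊕ β)) [DecidableRel G.Adj]
    (hbipL : ∀ a a' : α, ¬ G.Adj (Sum.inl a) (Sum.inl a'))
    (hbipR : ∀ b b' : β, ¬ G.Adj (Sum.inr b) (Sum.inr b'))
    (hpseudo : ∀ c : G.ConnectedComponent,
      {e ∈ G.edgeSet | ∀ v ∈ e, G.connectedComponentMk v = c}.ncard ≤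
        {v : α ⊕ β | G.connectedComponentMk v = c}.ncard)
    (hdeg : ∀ b : β, 2 ≤ G.degree (Sum.inr b)) :
    ∃ f : β → α, Function.Injective f ∧ ∀ b, G.Adj (Sum.inl (f b)) (Sum.inr b) :=
  stmt_19_general G hbipR hpseudo hdeg
end
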